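/- Let f : ℝ → ℝ be C², v ∈ ℝ, h : ℝ → ℝ be C¹, and Ψ(t,x) = f(x − vt). Define K = (∂ₓΨ, −∂ₜΨ, h(Ψ), 0) and Δ = (∂ₓΨ)² − (∂ₜΨ)² − h(Ψ)². On the open set where Δ > 0, define the unit timelike vector field u = K/√Δ. Then u satisfies η(u,u) = −1 and the flat geodesic equation u^ν ∂_ν u^μ = 0 at every point of that set. (This is the key computation showing that the leaves of ker F, spanned by u and ∂_z, have vanishing mean curvature, i.e. are minimal submanifolds.) -/

import Mathlib

noncomputable section

/-- `∂ₜΨ`. -/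
def psiT (Ψ : ℝ × ℝ → ℝ) (t x : ℝ) : ℝ := deriv (fun s => Ψ (s, x)) t

/-- `∂ₓΨ`. -/
def psiX (Ψ : ℝ × ℝ → ℝ) (t x : ℝ) : ℝ := deriv (fun s => Ψ (t, s)) x

/-- The kernel vector field `K = (∂ₓΨ, −∂ₜΨ, h(Ψ), 0)` on ℝ⁴ (independent of `y,z`). -/
def KF (Ψ : ℝ × ℝ → ℝ) (h : ℝ → ℝ) (p : Fin 4 → ℝ) : Fin 4 → ℝ :=
  ![psiX Ψ (p 0) (p 1), -(psiT Ψ (p 0) (p 1)), h (Ψ (p 0, p 1)), 0]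

/-- The type invariant `Δ = (∂ₓΨ)² − (∂ₜΨ)² − h(Ψ)²`. -/
def Delta (Ψ : ℝ × ℝ → ℝ) (h : ℝ → ℝ) (t x : ℝ) : ℝ :=
  (psiX Ψ t x) ^ 2 - (psiT Ψ t x) ^ 2 - (h (Ψ (t, x))) ^ 2

/-- The normalized vector field `u = K/√Δ`. -/
def uvec (Ψ : ℝ × ℝ → ℝ) (h : ℝ → ℝ) (p : Fin 4 → ℝ) (μ : Fin 4) : ℝ :=
  KF Ψ h p μ / Real.sqrt (Delta Ψ h (p 0) (p 1))

/-- Coordinate partial derivative `∂_ν f` on ℝ⁴. -/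
def pd (ν : Fin 4) (f : (Fin 4 → ℝ) → ℝ) (p : Fin 4 → ℝ) : ℝ :=
  deriv (fun s => f (Function.update p ν s)) (p ν)

/-! Everything in a traveling wave depends on `(t, x)` only through the phase `x − vt`, so `u`
has derivative zero along any direction tangent to the phase fronts. Since `K⁰ = f'` and
`K¹ = v f'`, the field `u` is itself tangent to the fronts, hence `u^ν ∂_ν u = 0`.
The normalization `η(u,u) = −1` is just `η(K,K) = −Δ`. -/

theorem deriv_comp_const_sub_mul (g : ℝ → ℝ) (a v t : ℝ) :
    deriv (fun s => g (a - v * s)) t = -v * deriv g (a - v * t) := by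
  have hcomp := deriv_comp_mul_left (f := fun y => g (a - y)) (c := v) (x := t)
  simp only [deriv_comp_const_sub, smul_eq_mul] at hcomp
  rw [hcomp]
  ring

theorem pd_comp_phase (G : ℝ → ℝ) (v : ℝ) (p : Fin 4 → ℝ) (ν : Fin 4) :
    pd ν (fun q => G (q 1 - v * q 0)) p = ![-v, 1, 0, 0] ν * deriv G (p 1 - v * p 0) := by
  fin_cases ν <;>
    simp [pd, deriv_comp_const_sub_mul, deriv_comp_sub_const]

theorem sum_mul_pd_comp_phase_eq_zero (U : ℝ → Fin 4 → ℝ) (v : ℝ) (p : Fin 4 → ℝ)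
    (hU : U (p 1 - v * p 0) 1 = v * U (p 1 - v * p 0) 0) (μ : Fin 4) :
    ∑ ν : Fin 4, U (p 1 - v * p 0) ν * pd ν (fun q => U (q 1 - v * q 0) μ) p = 0 := by
  simp only [Fin.sum_univ_four, pd_comp_phase (fun s => U s μ), hU, Matrix.cons_val_zero,
    Matrix.cons_val_one, Matrix.cons_val, zero_mul, mul_zero, add_zero]
  ring

theorem minkowski_norm_uvec (Ψ : ℝ × ℝ → ℝ) (h : ℝ → ℝ) (p : Fin 4 → ℝ)
    (hp : 0 < Delta Ψ h (p 0) (p 1)) :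
    -(uvec Ψ h p 0) ^ 2 + (uvec Ψ h p 1) ^ 2 + (uvec Ψ h p 2) ^ 2 + (uvec Ψ h p 3) ^ 2
      = -1 := by
  have hK : -(KF Ψ h p 0) ^ 2 + (KF Ψ h p 1) ^ 2 + (KF Ψ h p 2) ^ 2 + (KF Ψ h p 3) ^ 2
      = -Delta Ψ h (p 0) (p 1) := by
    simp only [KF, Delta, Matrix.cons_val_zero, Matrix.cons_val_one, Matrix.cons_val]
    ring
  simp only [uvec, div_pow, Real.sq_sqrt hp.le]
  field_simp
  linarith

def waveProfile (f h : ℝ → ℝ) (v s : ℝ) (μ : Fin 4) : ℝ :=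
  ![deriv f s, v * deriv f s, h (f s), 0] μ / √(deriv f s ^ 2 - (v * deriv f s) ^ 2 - h (f s) ^ 2)

theorem waveProfile_one (f h : ℝ → ℝ) (v s : ℝ) :
    waveProfile f h v s 1 = v * waveProfile f h v s 0 := by
  simp only [waveProfile, Matrix.cons_val_one, Matrix.cons_val_zero, mul_div_assoc]

section TravelingWave

variable {f : ℝ → ℝ} {v : ℝ} {Ψ : ℝ × ℝ → ℝ}

theorem psiX_of_travelingWave (hΨ : ∀ t x : ℝ, Ψ (t, x) = f (x - v * t)) (t x : ℝ) :
    psiX Ψ t x = deriv f (x - v * t) := by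
  simp only [psiX, hΨ, deriv_comp_sub_const]

theorem psiT_of_travelingWave (hΨ : ∀ t x : ℝ, Ψ (t, x) = f (x - v * t)) (t x : ℝ) :
    psiT Ψ t x = -v * deriv f (x - v * t) := by
  simp only [psiT, hΨ, deriv_comp_const_sub_mul]

theorem uvec_of_travelingWave (h : ℝ → ℝ) (hΨ : ∀ t x : ℝ, Ψ (t, x) = f (x - v * t))
    (q : Fin 4 → ℝ) (μ : Fin 4) :
    uvec Ψ h q μ = waveProfile f h v (q 1 - v * q 0) μ := by
  simp only [uvec, KF, Delta, waveProfile, psiX_of_travelingWave hΨ, psiT_of_travelingWave hΨ,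
    hΨ, neg_mul, neg_neg, neg_sq]

end TravelingWave

theorem stmt16_general (f : ℝ → ℝ) (v : ℝ)
    (h : ℝ → ℝ)
    (Ψ : ℝ × ℝ → ℝ) (hΨ : ∀ t x : ℝ, Ψ (t, x) = f (x - v * t))
    (p : Fin 4 → ℝ) (hp : 0 < Delta Ψ h (p 0) (p 1)) :
    (-(uvec Ψ h p 0) ^ 2 + (uvec Ψ h p 1) ^ 2 + (uvec Ψ h p 2) ^ 2 + (uvec Ψ h p 3) ^ 2
        = -1) ∧
    (∀ μ : Fin 4, ∑ ν : Fin 4, uvec Ψ h p ν * pd ν (fun q => uvec Ψ h q μ) p = 0) := by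
  refine ⟨minkowski_norm_uvec Ψ h p hp, fun μ => ?_⟩
  simp only [uvec_of_travelingWave h hΨ]
  exact sum_mul_pd_comp_phase_eq_zero (waveProfile f h v) v p (waveProfile_one f h v _) μ

/-- for a traveling wave `Ψ(t,x) = f(x − vt)`, on the set where `Δ > 0`
the unit vector field `u = K/√Δ` satisfies `η(u,u) = −1` and the flat geodesic equation
`u^ν ∂_ν u^μ = 0`. -/
theorem stmt16 (f : ℝ → ℝ) (hf : ContDiff ℝ 2 f) (v : ℝ)
    (h : ℝ → ℝ) (hh : ContDiff ℝ 1 h)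
    (Ψ : ℝ × ℝ → ℝ) (hΨ : ∀ t x : ℝ, Ψ (t, x) = f (x - v * t))
    (p : Fin 4 → ℝ) (hp : 0 < Delta Ψ h (p 0) (p 1)) :
    (-(uvec Ψ h p 0) ^ 2 + (uvec Ψ h p 1) ^ 2 + (uvec Ψ h p 2) ^ 2 + (uvec Ψ h p 3) ^ 2
        = -1) ∧
    (∀ μ : Fin 4, ∑ ν : Fin 4, uvec Ψ h p ν * pd ν (fun q => uvec Ψ h q μ) p = 0) :=
  stmt16_general f v h Ψ hΨ p hp
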